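/- arXiv:1504.07463 — 3 statements merged into one kernel-verified Lean document; each statement's English description precedes it below -/
import Mathlib

section
/- The intersection of the three ideals K = (z1, z2), K' = (z3, z4), and K'' = (z1+z3, z2+z4) in the polynomial ring C[z1,z2,z3,z4] equals the ideal generated by z1*z4 - z2*z3 together with the product ideal K·K'·K''. -/
open MvPolynomial

noncomputable def Kz : Ideal (MvPolynomial (Fin 4) ℂ) := Ideal.span {X 0, X 1}
noncomputable def Kz' : Ideal (MvPolynomial (Fin 4) ℂ) := Ideal.span {X 2, X 3}
noncomputable def Kz'' : Ideal (MvPolynomial (Fin 4) ℂ) :=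
  Ideal.span {X 0 + X 2, X 1 + X 3}

/-!
Every `f ∈ K ∩ K'` is a combination `a z₁z₃ + b z₁z₄ + c z₂z₃ + d z₂z₄` (apply `z₃, z₄ ↦ 0` to
`f = p z₁ + q z₂`). Modulo `K K' K''` the coefficients may be replaced by their images under the
retraction `ρ : z₃ ↦ -z₁, z₄ ↦ -z₂`, whose kernel contains `K''`. As `ρ f = 0`, these images satisfy
`ρa z₁² + (ρb + ρc) z₁z₂ + ρd z₂² = 0`, and since `z₁, z₂` are non-associate primes this forces
`ρa = z₂ g`, `ρd = z₁ k`, `ρb + ρc = -(g z₁ + k z₂)`; the reduced combination is then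
`-(g z₁ + ρc) (z₁z₄ - z₂z₃)`.
-/

theorem MvPolynomial.sub_aeval_mem_of_forall_X_sub_mem {σ R : Type*} [CommRing R]
    {I : Ideal (MvPolynomial σ R)} {φ : MvPolynomial σ R →ₐ[R] MvPolynomial σ R}
    (h : ∀ i, X i - φ (X i) ∈ I) (p : MvPolynomial σ R) : p - φ p ∈ I := by
  rw [← Ideal.Quotient.eq]
  have : Ideal.Quotient.mkₐ R I = (Ideal.Quotient.mkₐ R I).comp φ :=
    algHom_ext fun i => Ideal.Quotient.eq.2 (h i)
  exact congr($this p)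

theorem exists_of_mul_sq_add_mul_add_mul_sq_eq_zero {R : Type*} [CommRing R] [IsDomain R]
    {x y a e d : R} (hx : Prime x) (hy : Prime y) (hxy : ¬x ∣ y) (hyx : ¬y ∣ x)
    (h : a * x ^ 2 + e * (x * y) + d * y ^ 2 = 0) :
    ∃ g k, a = y * g ∧ d = x * k ∧ g * x + e + k * y = 0 := by
  obtain ⟨g, rfl⟩ : y ∣ a := by
    have : y ∣ a * x ^ 2 := ⟨-(e * x + d * y), by linear_combination h⟩
    exact (hy.dvd_or_dvd this).resolve_right fun hyx2 => hyx (hy.dvd_of_dvd_pow hyx2)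
  obtain ⟨k, rfl⟩ : x ∣ d := by
    have : x ∣ d * y ^ 2 := ⟨-(y * g * x + e * y), by linear_combination h⟩
    exact (hx.dvd_or_dvd this).resolve_right fun hxy2 => hxy (hx.dvd_of_dvd_pow hxy2)
  refine ⟨g, k, rfl, rfl, ?_⟩
  have : (x * y) * (g * x + e + k * y) = 0 := by linear_combination h
  exact (mul_eq_zero.1 this).resolve_left (mul_ne_zero hx.ne_zero hy.ne_zero)

noncomputable def retractKz' : MvPolynomial (Fin 4) ℂ →ₐ[ℂ] MvPolynomial (Fin 4) ℂ :=
  aeval ![X 0, X 1, 0, 0]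

noncomputable def retractKz'' : MvPolynomial (Fin 4) ℂ →ₐ[ℂ] MvPolynomial (Fin 4) ℂ :=
  aeval ![X 0, X 1, -X 0, -X 1]

theorem Kz'_le_ker_retractKz' : Kz' ≤ RingHom.ker retractKz' :=
  Ideal.span_le.2 (by simp [Set.insert_subset_iff, retractKz'])

theorem Kz''_le_ker_retractKz'' : Kz'' ≤ RingHom.ker retractKz'' :=
  Ideal.span_le.2 (by simp [Set.insert_subset_iff, retractKz''])

theorem sub_retractKz'_mem (p : MvPolynomial (Fin 4) ℂ) : p - retractKz' p ∈ Kz' :=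
  sub_aeval_mem_of_forall_X_sub_mem (fun i => by
    fin_cases i <;> simp [retractKz'] <;> exact Ideal.subset_span (by simp)) p

theorem sub_retractKz''_mem (p : MvPolynomial (Fin 4) ℂ) : p - retractKz'' p ∈ Kz'' :=
  sub_aeval_mem_of_forall_X_sub_mem (fun i => by
    fin_cases i <;> simp [retractKz''] <;> exact Ideal.subset_span (by simp [add_comm])) p

theorem exists_eq_of_mem_Kz_inf_Kz' {f : MvPolynomial (Fin 4) ℂ} (hf : f ∈ Kz ⊓ Kz') :
    ∃ a b c d, f = a * (X 0 * X 2) + b * (X 0 * X 3) + c * (X 1 * X 2) + d * (X 1 * X 3) := by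
  obtain ⟨p, q, rfl⟩ := Ideal.mem_span_pair.1 hf.1
  have hpq : retractKz' p * X 0 + retractKz' q * X 1 = 0 := by
    simpa [retractKz'] using Kz'_le_ker_retractKz' hf.2
  obtain ⟨a, b, hab⟩ := Ideal.mem_span_pair.1 (sub_retractKz'_mem p)
  obtain ⟨c, d, hcd⟩ := Ideal.mem_span_pair.1 (sub_retractKz'_mem q)
  exact ⟨a, b, c, d, by linear_combination -X 0 * hab - X 1 * hcd + hpq⟩

theorem sub_retractKz''_mul_mem_mul {u v : MvPolynomial (Fin 4) ℂ} (hu : u ∈ Kz) (hv : v ∈ Kz')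
    (p : MvPolynomial (Fin 4) ℂ) : (p - retractKz'' p) * (u * v) ∈ Kz * Kz' * Kz'' := by
  rw [mul_comm (p - _)]
  exact Ideal.mul_mem_mul (Ideal.mul_mem_mul hu hv) (sub_retractKz''_mem p)

theorem Kz_inf_Kz'_inf_Kz''_le :
    Kz ⊓ Kz' ⊓ Kz'' ≤ Ideal.span {X 0 * X 3 - X 1 * X 2} + Kz * Kz' * Kz'' := by
  intro f hf
  obtain ⟨a, b, c, d, rfl⟩ := exists_eq_of_mem_Kz_inf_Kz' hf.1
  have hτf := Kz''_le_ker_retractKz'' hf.2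
  have hτX (i : Fin 4) : retractKz'' (X i) = ![X 0, X 1, -X 0, -X 1] i := aeval_X _ _
  simp only [RingHom.mem_ker, map_add, map_mul, hτX, Matrix.cons_val] at hτf
  set τ := retractKz''
  have hquad : τ a * X 0 ^ 2 + (τ b + τ c) * (X 0 * X 1) + τ d * X 1 ^ 2 = 0 := by
    linear_combination -hτf
  obtain ⟨g, k, hg, hk, hgk⟩ :=
    exists_of_mul_sq_add_mul_add_mul_sq_eq_zero X_prime X_prime (by simp) (by simp) hquad
  have hX0 : (X 0 : MvPolynomial (Fin 4) ℂ) ∈ Kz := Ideal.subset_span (by simp)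
  have hX1 : (X 1 : MvPolynomial (Fin 4) ℂ) ∈ Kz := Ideal.subset_span (by simp)
  have hX2 : (X 2 : MvPolynomial (Fin 4) ℂ) ∈ Kz' := Ideal.subset_span (by simp)
  have hX3 : (X 3 : MvPolynomial (Fin 4) ℂ) ∈ Kz' := Ideal.subset_span (by simp)
  have hf_eq : a * (X 0 * X 2) + b * (X 0 * X 3) + c * (X 1 * X 2) + d * (X 1 * X 3) =
      (-(g * X 0) - τ c) * (X 0 * X 3 - X 1 * X 2) +
        ((a - τ a) * (X 0 * X 2) + (b - τ b) * (X 0 * X 3) + (c - τ c) * (X 1 * X 2) +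
          (d - τ d) * (X 1 * X 3)) := by
    linear_combination X 0 * X 2 * hg + X 1 * X 3 * hk + X 0 * X 3 * hgk
  rw [hf_eq, Ideal.add_eq_sup]
  refine Submodule.add_mem_sup (Ideal.mem_span_singleton'.2 ⟨_, rfl⟩) ?_
  exact add_mem (add_mem (add_mem (sub_retractKz''_mul_mem_mul hX0 hX2 a)
    (sub_retractKz''_mul_mem_mul hX0 hX3 b)) (sub_retractKz''_mul_mem_mul hX1 hX2 c))
    (sub_retractKz''_mul_mem_mul hX1 hX3 d)

theorem span_add_mul_le_Kz_inf_Kz'_inf_Kz'' :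
    Ideal.span {X 0 * X 3 - X 1 * X 2} + Kz * Kz' * Kz'' ≤ Kz ⊓ Kz' ⊓ Kz'' := by
  rw [Ideal.add_eq_sup]
  refine sup_le (Ideal.span_singleton_le_iff_mem _ |>.2 ⟨⟨?_, ?_⟩, ?_⟩)
    (le_inf (le_inf (Ideal.mul_le_left.trans Ideal.mul_le_left)
      (Ideal.mul_le_left.trans Ideal.mul_le_right)) Ideal.mul_le_right)
  · exact Ideal.mem_span_pair.2 ⟨X 3, -X 2, by ring⟩
  · exact Ideal.mem_span_pair.2 ⟨-X 1, X 0, by ring⟩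
  · exact Ideal.mem_span_pair.2 ⟨X 3, -X 2, by ring⟩

/-- The intersection K ∩ K' ∩ K'' equals (z1 z4 - z2 z3) + K·K'·K''. -/
theorem stmt0 :
    Kz ⊓ Kz' ⊓ Kz'' =
      Ideal.span {X 0 * X 3 - X 1 * X 2} + Kz * Kz' * Kz'' :=
  le_antisymm Kz_inf_Kz'_inf_Kz''_le span_add_mul_le_Kz_inf_Kz'_inf_Kz''
end

section
/- The intersection of the ideals (x1 - x2, x3 - x4) and (x1 + x2, x3 + x4) in C[x1,x2,x3,x4] is generated by (x1-x2)(x1+x2), (x3-x4)(x3+x4), (x1-x2)(x3+x4), and (x3-x4)(x1+x2). -/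
open MvPolynomial

noncomputable abbrev R4 := MvPolynomial (Fin 4) ℂ

lemma half2 (p : R4) : (1/2 : ℂ) • p * 2 = p := by
  rw [smul_mul_assoc, mul_comm]
  rw [show (2 : R4) * p = (2 : ℂ) • p by rw [smul_eq_C_mul, map_ofNat]]
  rw [smul_smul]; norm_num

noncomputable def ρ : R4 →ₐ[ℂ] R4 :=
  aeval ![X 0 - X 1, X 0 + X 1, X 2 - X 3, X 2 + X 3]

noncomputable def σ' : R4 →ₐ[ℂ] R4 :=
  aeval ![(1/2 : ℂ) • (X 0 + X 1), (1/2 : ℂ) • (X 1 - X 0),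
          (1/2 : ℂ) • (X 2 + X 3), (1/2 : ℂ) • (X 3 - X 2)]

noncomputable def e4 : R4 ≃ₐ[ℂ] R4 :=
  AlgEquiv.ofAlgHom ρ σ'
    (by
      apply MvPolynomial.algHom_ext
      intro i
      fin_cases i <;> simp [ρ, σ', smul_sub, smul_add] <;> ring_nf <;> exact half2 _)
    (by
      apply MvPolynomial.algHom_ext
      intro i
      fin_cases i <;> simp [ρ, σ', smul_sub, smul_add] <;> ring_nf <;> exact half2 _)

lemma single_add_single_le {m : Fin 4 →₀ ℕ} {i j : Fin 4} (hij : i ≠ j) :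
    Finsupp.single i 1 + Finsupp.single j 1 ≤ m ↔ m i ≠ 0 ∧ m j ≠ 0 := by
  rw [Finsupp.le_def]
  constructor
  · intro h
    have hi := h i; have hj := h j
    simp [Finsupp.single_apply, hij, hij.symm] at hi hj
    omega
  · rintro ⟨hi, hj⟩ k
    simp only [Finsupp.add_apply, Finsupp.single_apply]
    by_cases h1 : i = k <;> by_cases h2 : j = k <;> simp_all <;> omega

lemma mono4 : (Ideal.span {X 0, X 2} : Ideal R4) ⊓ Ideal.span {X 1, X 3} =
    Ideal.span {X 0 * X 1, X 2 * X 3, X 0 * X 3, X 2 * X 1} := by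
  have hX : ∀ i : Fin 4, (X i : R4) = monomial (Finsupp.single i 1) 1 := fun i => rfl
  have hXX : ∀ i j : Fin 4, (X i * X j : R4) =
      monomial (Finsupp.single i 1 + Finsupp.single j 1) 1 := by
    intro i j; rw [hX, hX, monomial_mul, one_mul]
  ext f
  have h1 : ({X 0, X 2} : Set R4) =
      (fun s => monomial s 1) '' {Finsupp.single 0 1, Finsupp.single 2 1} := by
    rw [Set.image_insert_eq, Set.image_singleton]; simp [hX]
  have h2 : ({X 1, X 3} : Set R4) =
      (fun s => monomial s 1) '' {Finsupp.single 1 1, Finsupp.single 3 1} := by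
    rw [Set.image_insert_eq, Set.image_singleton]; simp [hX]
  have h3 : ({X 0 * X 1, X 2 * X 3, X 0 * X 3, X 2 * X 1} : Set R4) =
      (fun s => monomial s 1) ''
        {Finsupp.single 0 1 + Finsupp.single 1 1, Finsupp.single 2 1 + Finsupp.single 3 1,
         Finsupp.single 0 1 + Finsupp.single 3 1, Finsupp.single 2 1 + Finsupp.single 1 1} := by
    simp only [Set.image_insert_eq, Set.image_singleton]; simp [hXX]
  rw [Ideal.mem_inf, h1, h2, h3, mem_ideal_span_monomial_image,
    mem_ideal_span_monomial_image, mem_ideal_span_monomial_image]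
  have h01 : (0 : Fin 4) ≠ 1 := by decide
  have h23 : (2 : Fin 4) ≠ 3 := by decide
  have h03 : (0 : Fin 4) ≠ 3 := by decide
  have h21 : (2 : Fin 4) ≠ 1 := by decide
  constructor
  · rintro ⟨ha, hb⟩ m hm
    obtain ⟨s1, hs1, hle1⟩ := ha m hm
    obtain ⟨s2, hs2, hle2⟩ := hb m hm
    simp only [Set.mem_insert_iff, Set.mem_singleton_iff] at hs1 hs2 ⊢
    rcases hs1 with rfl | rfl <;> rcases hs2 with rfl | rfl <;>
      rw [Finsupp.single_le_iff, Nat.one_le_iff_ne_zero] at hle1 hle2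
    · exact ⟨_, Or.inl rfl, (single_add_single_le h01).2 ⟨hle1, hle2⟩⟩
    · exact ⟨_, Or.inr (Or.inr (Or.inl rfl)), (single_add_single_le h03).2 ⟨hle1, hle2⟩⟩
    · exact ⟨_, Or.inr (Or.inr (Or.inr rfl)), (single_add_single_le h21).2 ⟨hle1, hle2⟩⟩
    · exact ⟨_, Or.inr (Or.inl rfl), (single_add_single_le h23).2 ⟨hle1, hle2⟩⟩
  · intro h
    constructor <;> intro m hm <;> obtain ⟨s, hs, hle⟩ := h m hm <;>
      simp only [Set.mem_insert_iff, Set.mem_singleton_iff] at hs ⊢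
    · rcases hs with rfl | rfl | rfl | rfl
      · exact ⟨_, Or.inl rfl, le_trans (le_add_right le_rfl) hle⟩
      · exact ⟨_, Or.inr rfl, le_trans (le_add_right le_rfl) hle⟩
      · exact ⟨_, Or.inl rfl, le_trans (le_add_right le_rfl) hle⟩
      · exact ⟨_, Or.inr rfl, le_trans (le_add_right le_rfl) hle⟩
    · rcases hs with rfl | rfl | rfl | rfl
      · exact ⟨_, Or.inl rfl, le_trans (le_add_left le_rfl) hle⟩
      · exact ⟨_, Or.inr rfl, le_trans (le_add_left le_rfl) hle⟩
      · exact ⟨_, Or.inr rfl, le_trans (le_add_left le_rfl) hle⟩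
      · exact ⟨_, Or.inl rfl, le_trans (le_add_left le_rfl) hle⟩

lemma hv (p : R4) : e4 p = ρ p := rfl

/-- (x1-x2, x3-x4) ∩ (x1+x2, x3+x4) =
((x1-x2)(x1+x2), (x3-x4)(x3+x4), (x1-x2)(x3+x4), (x3-x4)(x1+x2))
in ℂ[x1,x2,x3,x4] (X 0 = x1, X 1 = x2, X 2 = x3, X 3 = x4). -/
theorem stmt4 :
    (Ideal.span {X 0 - X 1, X 2 - X 3} : Ideal (MvPolynomial (Fin 4) ℂ)) ⊓
        Ideal.span {X 0 + X 1, X 2 + X 3} =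
      Ideal.span {(X 0 - X 1) * (X 0 + X 1), (X 2 - X 3) * (X 2 + X 3),
        (X 0 - X 1) * (X 2 + X 3), (X 2 - X 3) * (X 0 + X 1)} := by
  have := congrArg (Ideal.map (e4.toRingEquiv : R4 →+* R4)) mono4
  rw [Ideal.map_comap_of_equiv, Ideal.comap_inf, ← Ideal.map_comap_of_equiv,
    ← Ideal.map_comap_of_equiv] at this
  rw [Ideal.map_span, Ideal.map_span, Ideal.map_span] at this
  have he : ∀ p : R4, (e4.toRingEquiv : R4 →+* R4) p = ρ p := fun p => rfl
  have e1 : ⇑(e4.toRingEquiv : R4 →+* R4) '' {X 0, X 2} = {X 0 - X 1, X 2 - X 3} := by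
    simp [Set.image_insert_eq, Set.image_singleton, he, hv, ρ]
  have e2 : ⇑(e4.toRingEquiv : R4 →+* R4) '' {X 1, X 3} = {X 0 + X 1, X 2 + X 3} := by
    simp [Set.image_insert_eq, Set.image_singleton, he, hv, ρ]
  have e3 : ⇑(e4.toRingEquiv : R4 →+* R4) '' {X 0 * X 1, X 2 * X 3, X 0 * X 3, X 2 * X 1} =
      {(X 0 - X 1) * (X 0 + X 1), (X 2 - X 3) * (X 2 + X 3),
        (X 0 - X 1) * (X 2 + X 3), (X 2 - X 3) * (X 0 + X 1)} := by
    simp [Set.image_insert_eq, Set.image_singleton, he, hv, ρ, map_mul]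
  rw [e1, e2, e3] at this
  exact this
end

section
/- The binomials w01·w23 − w03·w12, w03·w24 − w04·w23, w04·w12 − w01·w24, w01·w12 − w03·w24, w01² − w03·w04, w12² − w23·w24 generate a prime ideal in C[w01,w02,w03,w04,w12,w23,w24]; equivalently the variety W02 they cut out in C^7 is an irreducible (toric) variety of dimension 4. -/
/-!
`W02Ideal` is the kernel of the monomial map `phi` sending
`(w01, w02, w03, w04, w12, w23, w24)` to `(t₀t₁, t₃, t₀², t₁², t₀t₁t₂, t₀²t₂, t₁²t₂)`, hence prime.
Indeed, oriented from the monomial of larger weight for `(7, 0, 0, 1, 5, 1, 0)`, the generators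
rewrite every monomial modulo the ideal into one divisible by none of
`w01², w01w12, w01w23, w01w24, w12², w04w23`, and `phi` is injective on these standard monomials.

The quotient is integral over `ℂ[w02, w03, w24, w04 + w23]`: `w04` and `w23` are the roots of
`T² - (w04 + w23)T + w03w24`, and `w01² = w03w04`, `w12² = w23w24`. So its dimension is at most 4.
Killing the nonzerodivisor `w01` it surjects onto the coordinate ring of the 3-space
`w01 = w04 = w12 = w24 = 0` contained in W02, so its dimension is at least `3 + 1`.
-/

open MvPolynomial

/-- Variables indexed as 0:w01, 1:w02, 2:w03, 3:w04, 4:w12, 5:w23, 6:w24. -/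
noncomputable def W02Ideal : Ideal (MvPolynomial (Fin 7) ℂ) :=
  Ideal.span {X 0 * X 5 - X 2 * X 4, X 2 * X 6 - X 3 * X 5, X 3 * X 4 - X 0 * X 6,
    X 0 * X 4 - X 2 * X 6, X 0 ^ 2 - X 2 * X 3, X 4 ^ 2 - X 5 * X 6}

section BinomialRewriting

variable {σ τ R : Type*} [CommRing R] {J : Ideal (MvPolynomial σ R)}

lemma monomial_sub_monomial_mem_of_le {α β u : σ →₀ ℕ}
    (h : monomial α (1 : R) - monomial β 1 ∈ J) (hα : α ≤ u) (c : R) :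
    monomial u c - monomial (u - α + β) c ∈ J := by
  obtain ⟨v, rfl⟩ := exists_add_of_le hα
  have key : monomial (α + v) c - monomial (α + v - α + β) c
      = monomial v c * (monomial α 1 - monomial β 1) := by
    rw [add_tsub_cancel_left, mul_sub, monomial_mul, monomial_mul, mul_one, add_comm α]
  exact key ▸ J.mul_mem_left _ h

variable (rules : Set ((σ →₀ ℕ) × (σ →₀ ℕ)))

theorem exists_monomial_sub_mem_of_rules (w : σ → ℕ)
    (hJ : ∀ r ∈ rules, monomial r.1 (1 : R) - monomial r.2 1 ∈ J)
    (hw : ∀ r ∈ rules, Finsupp.weight w r.2 < Finsupp.weight w r.1) (u : σ →₀ ℕ) (c : R) :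
    ∃ v, (∀ r ∈ rules, ¬ r.1 ≤ v) ∧ monomial u c - monomial v c ∈ J := by
  induction h : Finsupp.weight w u using Nat.strong_induction_on generalizing u with
  | _ n ih =>
  by_cases hu : ∀ r ∈ rules, ¬ r.1 ≤ u
  · exact ⟨u, hu, by simp⟩
  push Not at hu
  obtain ⟨r, hr, hle⟩ := hu
  have hlt : Finsupp.weight w (u - r.1 + r.2) < n := by
    have hsplit := congrArg (Finsupp.weight w) (tsub_add_cancel_of_le hle)
    simp only [map_add] at hsplit ⊢
    have := hw r hr
    omega
  obtain ⟨v, hv, hmem⟩ := ih _ hlt _ rfl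
  exact ⟨v, hv, by
    simpa using J.add_mem (monomial_sub_monomial_mem_of_le (hJ r hr) hle c) hmem⟩

variable {S : Set (σ →₀ ℕ)}

theorem exists_sub_mem_support_subset
    (hred : ∀ (u : σ →₀ ℕ) (c : R), ∃ v ∈ S, monomial u c - monomial v c ∈ J)
    (p : MvPolynomial σ R) : ∃ q, p - q ∈ J ∧ ↑q.support ⊆ S := by
  classical
  induction p using MvPolynomial.induction_on' with
  | monomial u c =>
    obtain ⟨v, hv, hmem⟩ := hred u c
    refine ⟨monomial v c, hmem, fun w hw => ?_⟩
    rw [Finset.mem_singleton.mp (support_monomial_subset hw)]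
    exact hv
  | add p q hp hq =>
    obtain ⟨p', hp, hp'⟩ := hp
    obtain ⟨q', hq, hq'⟩ := hq
    refine ⟨p' + q', by simpa [add_sub_add_comm] using J.add_mem hp hq, ?_⟩
    exact (Finset.coe_subset.mpr support_add).trans (by simpa using ⟨hp', hq'⟩)

theorem eq_zero_of_map_eq_zero_of_injOn (f : MvPolynomial σ R →+* MvPolynomial τ R)
    (e : (σ →₀ ℕ) → (τ →₀ ℕ)) (hf : ∀ u c, f (monomial u c) = monomial (e u) c)
    (he : Set.InjOn e S) {q : MvPolynomial σ R} (hq : ↑q.support ⊆ S) (h : f q = 0) :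
    q = 0 := by
  classical
  ext u
  by_cases hu : u ∈ q.support
  · have hfq : f q = ∑ v ∈ q.support, monomial (e v) (coeff v q) := by
      conv_lhs => rw [q.as_sum]
      simp only [map_sum, hf]
    have : coeff (e u) (f q) = coeff u q := by
      rw [hfq, coeff_sum, Finset.sum_eq_single_of_mem u hu, coeff_monomial, if_pos rfl]
      intro v hv hvu
      rw [coeff_monomial, if_neg fun huv => hvu (he (hq hv) (hq hu) huv)]
    rw [← this, h, coeff_zero, coeff_zero]
  · exact notMem_support_iff.mp hu

theorem ker_eq_of_injOn (f : MvPolynomial σ R →+* MvPolynomial τ R)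
    (e : (σ →₀ ℕ) → (τ →₀ ℕ)) (hf : ∀ u c, f (monomial u c) = monomial (e u) c)
    (he : Set.InjOn e S)
    (hred : ∀ (u : σ →₀ ℕ) (c : R), ∃ v ∈ S, monomial u c - monomial v c ∈ J)
    (hJ : J ≤ RingHom.ker f) : RingHom.ker f = J := by
  refine le_antisymm (fun p hp => ?_) hJ
  obtain ⟨q, hpq, hq⟩ := exists_sub_mem_support_subset hred p
  have hq0 : q = 0 := eq_zero_of_map_eq_zero_of_injOn f e hf he hq <| by
    simpa [RingHom.mem_ker.mp hp] using RingHom.mem_ker.mp (hJ hpq)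
  simpa [hq0] using hpq

end BinomialRewriting

theorem ringKrullDim_le_of_isIntegral {R S : Type*} [CommRing R] [CommRing S] [Algebra R S]
    [Algebra.IsIntegral R S] : ringKrullDim S ≤ ringKrullDim R :=
  Order.krullDim_le_of_strictMono (PrimeSpectrum.comap (algebraMap R S))
    fun _ _ h => Ideal.IsIntegral.comap_lt_comap (R := R) h

theorem ringKrullDim_mvPolynomial_fin (K : Type*) [Field K] (n : ℕ) :
    ringKrullDim (MvPolynomial (Fin n) K) = n := by
  rw [MvPolynomial.ringKrullDim_of_isNoetherianRing, ringKrullDim_eq_zero_of_field, Nat.card_fin,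
    zero_add]

lemma isIntegral_of_algebraMap_eq_add_of_algebraMap_eq_mul {R S : Type*} [CommRing R]
    [CommRing S] [Algebra R S] {a b : S} {s p : R} (hs : algebraMap R S s = a + b)
    (hp : algebraMap R S p = a * b) : IsIntegral R a := by
  refine ⟨Polynomial.X ^ 2 - Polynomial.C s * Polynomial.X + Polynomial.C p, ?_, ?_⟩
  · monicity!
  · simp [hs, hp]
    ring

lemma Finsupp.single_add_single_le_iff {ι M : Type*} [AddCommMonoid M] [PartialOrder M]
    [CanonicallyOrderedAdd M] {i j : ι} (hij : i ≠ j) {a b : M} {v : ι →₀ M} :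
    single i a + single j b ≤ v ↔ a ≤ v i ∧ b ≤ v j := by
  refine ⟨fun h => ⟨by simpa [hij] using h i, by simpa [hij.symm] using h j⟩, ?_⟩
  rintro ⟨hi, hj⟩ k
  by_cases hki : k = i
  · subst hki; simpa [hij] using hi
  by_cases hkj : k = j
  · subst hkj; simpa [Ne.symm hki] using hj
  simp [Ne.symm hki, Ne.symm hkj]

namespace W02

open Finsupp

def rules : Set ((Fin 7 →₀ ℕ) × (Fin 7 →₀ ℕ)) :=
  {(single 0 2, single 2 1 + single 3 1), (single 0 1 + single 4 1, single 2 1 + single 6 1),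
    (single 0 1 + single 5 1, single 2 1 + single 4 1),
    (single 0 1 + single 6 1, single 3 1 + single 4 1), (single 4 2, single 5 1 + single 6 1),
    (single 3 1 + single 5 1, single 2 1 + single 6 1)}

lemma weight_lt_of_mem_rules :
    ∀ r ∈ rules, weight ![7, 0, 0, 1, 5, 1, 0] r.2 < weight ![7, 0, 0, 1, 5, 1, 0] r.1 := by
  rintro r (rfl | rfl | rfl | rfl | rfl | rfl) <;> simp [weight_single]

lemma sub_mem_of_mem_rules :
    ∀ r ∈ rules, monomial r.1 (1 : ℂ) - monomial r.2 1 ∈ W02Ideal := by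
  have gen : ∀ p ∈ ({X 0 * X 5 - X 2 * X 4, X 2 * X 6 - X 3 * X 5, X 3 * X 4 - X 0 * X 6,
      X 0 * X 4 - X 2 * X 6, X 0 ^ 2 - X 2 * X 3, X 4 ^ 2 - X 5 * X 6} :
      Set (MvPolynomial (Fin 7) ℂ)), p ∈ W02Ideal := fun p hp => Ideal.subset_span hp
  rintro r (rfl | rfl | rfl | rfl | rfl | rfl) <;>
    simp only [monomial_add_single, ← X_pow_eq_monomial, pow_one]
  all_goals first
    | (apply gen; simp; done)
    | (rw [← neg_sub]; exact neg_mem (gen _ (by simp)))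

def standard : Set (Fin 7 →₀ ℕ) := {v | ∀ r ∈ rules, ¬ r.1 ≤ v}

noncomputable def phi : MvPolynomial (Fin 7) ℂ →ₐ[ℂ] MvPolynomial (Fin 4) ℂ :=
  aeval ![X 0 * X 1, X 3, X 0 ^ 2, X 1 ^ 2, X 0 * X 1 * X 2, X 0 ^ 2 * X 2, X 1 ^ 2 * X 2]

noncomputable def tau (u : Fin 7 →₀ ℕ) : Fin 4 →₀ ℕ :=
  equivFunOnFinite.symm
    ![u 0 + 2 * u 2 + u 4 + 2 * u 5, u 0 + 2 * u 3 + u 4 + 2 * u 6, u 4 + u 5 + u 6, u 1]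

lemma phi_monomial (u : Fin 7 →₀ ℕ) (c : ℂ) : phi (monomial u c) = monomial (tau u) c := by
  rw [phi, aeval_monomial, monomial_eq, prod_fintype _ _ (fun _ => pow_zero _),
    prod_fintype _ _ (fun _ => pow_zero _), Fin.prod_univ_seven, Fin.prod_univ_four]
  simp only [tau, coe_equivFunOnFinite_symm, algebraMap_eq, Matrix.cons_val]
  ring

lemma le_ker_phi : W02Ideal ≤ RingHom.ker phi := by
  rw [W02Ideal, Ideal.span_le]
  rintro p (rfl | rfl | rfl | rfl | rfl | rfl) <;> simp [phi] <;> ring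

lemma coords_of_mem_standard {v : Fin 7 →₀ ℕ} (hv : v ∈ standard) :
    v 0 ≤ 1 ∧ v 4 ≤ 1 ∧ (v 0 = 0 ∨ v 4 = 0) ∧ (v 0 = 0 ∨ v 5 = 0) ∧ (v 0 = 0 ∨ v 6 = 0) ∧
      (v 3 = 0 ∨ v 5 = 0) := by
  have h := fun r hr => hv r hr
  simp only [rules, Set.mem_insert_iff, Set.mem_singleton_iff, forall_eq_or_imp, forall_eq,
    single_le_iff, single_add_single_le_iff (by decide : (0 : Fin 7) ≠ 4),
    single_add_single_le_iff (by decide : (0 : Fin 7) ≠ 5),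
    single_add_single_le_iff (by decide : (0 : Fin 7) ≠ 6),
    single_add_single_le_iff (by decide : (3 : Fin 7) ≠ 5)] at h
  omega

/- Without `t₂`, the exponent of `w01` is the parity of that of `t₀`; with `t₂`, `w01` is absent,
`w12` takes that parity, and excluding `w04w23` leaves one way to distribute the rest. -/
lemma tau_injOn : Set.InjOn tau standard := by
  intro u hu v hv huv
  have h := fun i => DFunLike.congr_fun huv i
  simp only [tau, coe_equivFunOnFinite_symm, Fin.forall_fin_succ, IsEmpty.forall_iff,
    Matrix.cons_val_zero, Matrix.cons_val_succ] at h
  obtain ⟨h0, h1, h2, h3, -⟩ := h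
  have := coords_of_mem_standard hu
  have := coords_of_mem_standard hv
  ext i
  fin_cases i <;> simp <;> omega

theorem ker_phi : RingHom.ker phi = W02Ideal :=
  ker_eq_of_injOn phi.toRingHom tau phi_monomial tau_injOn
    (fun u c => exists_monomial_sub_mem_of_rules rules _ sub_mem_of_mem_rules
      weight_lt_of_mem_rules u c) le_ker_phi

theorem isPrime : W02Ideal.IsPrime := ker_phi ▸ RingHom.ker_isPrime _

instance : W02Ideal.IsPrime := isPrime

local notation "Q" => MvPolynomial (Fin 7) ℂ ⧸ W02Ideal

noncomputable abbrev x (i : Fin 7) : Q := Ideal.Quotient.mk W02Ideal (X i)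

lemma x0_sq : x 0 ^ 2 = x 2 * x 3 := by
  simp only [x, ← map_mul, ← map_pow]
  exact Ideal.Quotient.eq.mpr (Ideal.subset_span (by simp))

lemma x3_mul_x5 : x 3 * x 5 = x 2 * x 6 := by
  simp only [x, ← map_mul]
  exact (Ideal.Quotient.eq.mpr (Ideal.subset_span (by simp))).symm

lemma x4_sq : x 4 ^ 2 = x 5 * x 6 := by
  simp only [x, ← map_mul, ← map_pow]
  exact Ideal.Quotient.eq.mpr (Ideal.subset_span (by simp))

lemma x0_ne_zero : x 0 ≠ 0 := by
  intro h
  have : phi (X 0) = 0 := le_ker_phi (Ideal.Quotient.eq_zero_iff_mem.mp h)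
  simp [phi, X_ne_zero] at this

noncomputable def params : MvPolynomial (Fin 4) ℂ →ₐ[ℂ] Q := aeval ![x 1, x 2, x 6, x 3 + x 5]

lemma isIntegral_params (p : MvPolynomial (Fin 4) ℂ) : IsIntegral params.range (params p) :=
  isIntegral_algebraMap (x := (⟨params p, p, rfl⟩ : params.range))

lemma isIntegral_x (i : Fin 7) : IsIntegral params.range (x i) := by
  have h1 : IsIntegral params.range (x 1) := by simpa [params] using isIntegral_params (X 0)
  have h2 : IsIntegral params.range (x 2) := by simpa [params] using isIntegral_params (X 1)
  have h6 : IsIntegral params.range (x 6) := by simpa [params] using isIntegral_params (X 2)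
  let s : params.range := ⟨x 3 + x 5, X 3, by simp [params]⟩
  let p : params.range := ⟨x 2 * x 6, X 1 * X 2, by simp [params]⟩
  have h3 : IsIntegral params.range (x 3) :=
    isIntegral_of_algebraMap_eq_add_of_algebraMap_eq_mul (s := s) (p := p) rfl x3_mul_x5.symm
  have h5 : IsIntegral params.range (x 5) :=
    isIntegral_of_algebraMap_eq_add_of_algebraMap_eq_mul (s := s) (p := p) (add_comm (x 3) (x 5))
      (x3_mul_x5.symm.trans (mul_comm _ _))
  fin_cases i
  · exact .of_pow two_pos (x0_sq ▸ h2.mul h3)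
  · exact h1
  · exact h2
  · exact h3
  · exact .of_pow two_pos (x4_sq ▸ h5.mul h6)
  · exact h5
  · exact h6

instance : Algebra.IsIntegral params.range Q := by
  refine ⟨fun q => ?_⟩
  obtain ⟨p, rfl⟩ := Ideal.Quotient.mk_surjective q
  induction p using MvPolynomial.induction_on with
  | C a =>
    rw [← algebraMap_eq, Ideal.Quotient.mk_algebraMap, ← params.commutes]
    exact isIntegral_params _
  | add p q hp hq => exact map_add (Ideal.Quotient.mk W02Ideal) p q ▸ hp.add hq
  | mul_X p i hp => exact map_mul (Ideal.Quotient.mk W02Ideal) p (X i) ▸ hp.mul (isIntegral_x i)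

theorem ringKrullDim_quotient_le : ringKrullDim Q ≤ 4 :=
  calc ringKrullDim Q ≤ ringKrullDim params.range := ringKrullDim_le_of_isIntegral
    _ ≤ ringKrullDim (MvPolynomial (Fin 4) ℂ) :=
      ringKrullDim_le_of_surjective params.rangeRestrict.toRingHom params.rangeRestrict_surjective
    _ = 4 := ringKrullDim_mvPolynomial_fin ℂ 4

noncomputable def restrictPlane : MvPolynomial (Fin 7) ℂ →ₐ[ℂ] MvPolynomial (Fin 3) ℂ :=
  aeval ![0, X 0, X 1, 0, 0, X 2, 0]

lemma le_ker_restrictPlane : W02Ideal ≤ RingHom.ker restrictPlane := by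
  rw [W02Ideal, Ideal.span_le]
  rintro p (rfl | rfl | rfl | rfl | rfl | rfl) <;> simp [restrictPlane]

lemma restrictPlane_surjective : Function.Surjective restrictPlane := fun p =>
  ⟨rename ![1, 2, 5] p, by
    rw [restrictPlane, aeval_rename]
    convert aeval_X_left_apply p
    ext i
    fin_cases i <;> rfl⟩

theorem le_ringKrullDim_quotient : 4 ≤ ringKrullDim Q :=
  calc (4 : WithBot ℕ∞) = ringKrullDim (MvPolynomial (Fin 3) ℂ) + 1 := by
        rw [ringKrullDim_mvPolynomial_fin]; rfl
    _ ≤ ringKrullDim Q :=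
      ringKrullDim_succ_le_of_surjective
        (Ideal.Quotient.lift W02Ideal restrictPlane.toRingHom le_ker_restrictPlane)
        (Ideal.Quotient.lift_surjective_of_surjective _ _ restrictPlane_surjective)
        (mem_nonZeroDivisors_of_ne_zero x0_ne_zero) (by simp [restrictPlane])

end W02

/-- The binomial ideal of W02 is prime, and the quotient has Krull dimension 4;
i.e., W02 is an irreducible 4-dimensional (toric) variety. -/
theorem stmt16 :
    W02Ideal.IsPrime ∧
      ringKrullDim (MvPolynomial (Fin 7) ℂ ⧸ W02Ideal) = 4 :=
  ⟨W02.isPrime, le_antisymm W02.ringKrullDim_quotient_le W02.le_ringKrullDim_quotient⟩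
end
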